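/- Let k ≥ 2 and let T_k be the spider tree with vertex set {r} ∪ {u_i, u′_i : 1 ≤ i ≤ k} and edges {r,u_i} and {u_i,u′_i} for 1 ≤ i ≤ k. The globally minimal defensive alliances of T_k are exactly the k singletons {u′_i} (1 ≤ i ≤ k) together with the sets {r} ∪ A′ where A′ ⊆ {u_1,…,u_k} and |A′| = ⌈(k−1)/2⌉; in particular, T_k has exactly k + binom(k, ⌈(k−1)/2⌉) globally minimal defensive alliances. -/

import Mathlib

/-- `degIn G X v` is the number of neighbors of `v` lying in the set `X`
(denoted `deg_X(v)` in the paper). -/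
noncomputable def degIn {V : Type*} (G : SimpleGraph V) (X : Set V) (v : V) : ℕ :=
  {u | u ∈ X ∧ G.Adj v u}.ncard

/-- `A` is a defensive alliance of `G`: every `v ∈ A` satisfies
`deg_A(v) + 1 ≥ deg_{V∖A}(v)`. -/
def IsDefensiveAlliance {V : Type*} (G : SimpleGraph V) (A : Set V) : Prop :=
  ∀ v ∈ A, degIn G A v + 1 ≥ degIn G Aᶜ v

/-- A nonempty defensive alliance is globally minimal if no nonempty proper
subset is a defensive alliance. -/
def IsGloballyMinimalDA {V : Type*} (G : SimpleGraph V) (A : Set V) : Prop :=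
  A.Nonempty ∧ IsDefensiveAlliance G A ∧
    ∀ B : Set V, B ⊂ A → B.Nonempty → ¬ IsDefensiveAlliance G B

/-- A nonempty defensive alliance is locally minimal if for every `v ∈ A`,
the set `A ∖ {v}` is not a nonempty defensive alliance. -/
def IsLocallyMinimalDA {V : Type*} (G : SimpleGraph V) (A : Set V) : Prop :=
  A.Nonempty ∧ IsDefensiveAlliance G A ∧
    ∀ v ∈ A, ¬ ((A \ {v}).Nonempty ∧ IsDefensiveAlliance G (A \ {v}))

/-- The spider tree `T_k` with root `r = Sum.inl ()`, middle vertices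
`u_i = Sum.inr (Sum.inl i)` and leaves `u'_i = Sum.inr (Sum.inr i)`;
edges are `{r, u_i}` and `{u_i, u'_i}` for `1 ≤ i ≤ k`. -/
def spiderTree (k : ℕ) : SimpleGraph (Unit ⊕ Fin k ⊕ Fin k) :=
  SimpleGraph.fromRel (fun a b =>
    (∃ i : Fin k, a = Sum.inl () ∧ b = Sum.inr (Sum.inl i)) ∨
    (∃ i : Fin k, a = Sum.inr (Sum.inl i) ∧ b = Sum.inr (Sum.inr i)))

/-! Since `deg_A v + deg_{V∖A} v = deg v`, a set `A` is a defensive alliance iff every `v ∈ A`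
has at least `⌊deg v / 2⌋` neighbours in `A`. In `T_k` this constrains only the root (it needs
`⌊k / 2⌋` middle vertices) and the middle vertices (each needs the root or its leaf). A leaf alone
is an alliance, so a globally minimal alliance containing a leaf is that leaf; any other one is
the root together with middle vertices, and minimality forces exactly `⌊k / 2⌋ = ⌈(k - 1) / 2⌉`
of them. -/

section General

variable {V : Type*} {G : SimpleGraph V}

lemma degIn_eq_ncard_inter (X : Set V) (v : V) :
    degIn G X v = (G.neighborSet v ∩ X).ncard := by
  rw [degIn, Set.inter_comm]
  rfl

lemma degIn_add_degIn_compl [Finite V] (X : Set V) (v : V) :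
    degIn G X v + degIn G Xᶜ v = (G.neighborSet v).ncard := by
  rw [degIn_eq_ncard_inter, degIn_eq_ncard_inter, ← Set.sdiff_eq,
    Set.ncard_inter_add_ncard_sdiff_eq_ncard]

lemma isDefensiveAlliance_iff_half_ncard_neighborSet_le [Finite V] {A : Set V} :
    IsDefensiveAlliance G A ↔ ∀ v ∈ A, (G.neighborSet v).ncard / 2 ≤ degIn G A v := by
  refine forall₂_congr fun v _ => ?_
  have := degIn_add_degIn_compl (G := G) A v
  omega

lemma isGloballyMinimalDA_iff_forall_subset {A : Set V} :
    IsGloballyMinimalDA G A ↔ A.Nonempty ∧ IsDefensiveAlliance G A ∧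
      ∀ B ⊆ A, B.Nonempty → IsDefensiveAlliance G B → B = A := by
  refine and_congr_right fun _ => and_congr_right fun _ => ⟨?_, ?_⟩
  · intro h B hBA hB hDA
    by_contra hne
    exact h B (hBA.ssubset_of_ne hne) hB hDA
  · intro h B hBA hB hDA
    exact hBA.ne (h B hBA.subset hB hDA)

end General

namespace SpiderTree

variable {k : ℕ}

abbrev root : Unit ⊕ Fin k ⊕ Fin k := Sum.inl ()

abbrev mid (i : Fin k) : Unit ⊕ Fin k ⊕ Fin k := Sum.inr (Sum.inl i)

abbrev leaf (i : Fin k) : Unit ⊕ Fin k ⊕ Fin k := Sum.inr (Sum.inr i)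

lemma mid_injective : Function.Injective (mid (k := k)) := fun _ _ h => by simpa using h

lemma neighborSet_root : (spiderTree k).neighborSet root = Set.range mid := by
  ext v
  simp only [spiderTree, SimpleGraph.mem_neighborSet, SimpleGraph.fromRel_adj]
  aesop

lemma neighborSet_mid (i : Fin k) : (spiderTree k).neighborSet (mid i) = {root, leaf i} := by
  ext v
  simp only [spiderTree, SimpleGraph.mem_neighborSet, SimpleGraph.fromRel_adj]
  aesop

lemma neighborSet_leaf (i : Fin k) : (spiderTree k).neighborSet (leaf i) = {mid i} := by
  ext v
  simp only [spiderTree, SimpleGraph.mem_neighborSet, SimpleGraph.fromRel_adj]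
  aesop

lemma isDefensiveAlliance_iff {A : Set (Unit ⊕ Fin k ⊕ Fin k)} :
    IsDefensiveAlliance (spiderTree k) A ↔
      (root ∈ A → k / 2 ≤ (mid ⁻¹' A).ncard) ∧ ∀ i, mid i ∈ A → root ∈ A ∨ leaf i ∈ A := by
  have at_root : degIn (spiderTree k) A root = (mid ⁻¹' A).ncard := by
    rw [degIn_eq_ncard_inter, neighborSet_root, Set.inter_comm,
      ← Set.image_preimage_eq_inter_range, Set.ncard_image_of_injective _ mid_injective]
  have at_mid (i : Fin k) : 1 ≤ degIn (spiderTree k) A (mid i) ↔ root ∈ A ∨ leaf i ∈ A := by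
    rw [degIn_eq_ncard_inter, neighborSet_mid, Nat.one_le_iff_ne_zero, Ne,
      Set.ncard_eq_zero, ← Ne, ← Set.nonempty_iff_ne_empty]
    simp only [Set.Nonempty, Set.mem_inter_iff, Set.mem_insert_iff, Set.mem_singleton_iff]
    aesop
  have ncard_range_mid : (Set.range (mid (k := k))).ncard = k := by
    rw [Set.ncard_range_of_injective mid_injective, Nat.card_fin]
  rw [isDefensiveAlliance_iff_half_ncard_neighborSet_le, Sum.forall, Unique.forall_iff, Sum.forall,
    neighborSet_root, ncard_range_mid, at_root]
  simp only [neighborSet_mid, neighborSet_leaf, Set.ncard_pair Sum.inl_ne_inr,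
    Set.ncard_singleton, at_mid]
  simp

def rootUnion (S : Set (Fin k)) : Set (Unit ⊕ Fin k ⊕ Fin k) := {root} ∪ mid '' S

lemma root_mem_rootUnion (S : Set (Fin k)) : root ∈ rootUnion S := Or.inl rfl

lemma leaf_notMem_rootUnion (S : Set (Fin k)) (i : Fin k) : leaf i ∉ rootUnion S := by
  simp [rootUnion]

lemma preimage_mid_rootUnion (S : Set (Fin k)) : mid ⁻¹' rootUnion S = S := by
  ext i
  simp [rootUnion]

lemma rootUnion_injective : Function.Injective (rootUnion (k := k)) := fun S T h => by
  rw [← preimage_mid_rootUnion S, h, preimage_mid_rootUnion]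

lemma isDefensiveAlliance_rootUnion_iff {S : Set (Fin k)} :
    IsDefensiveAlliance (spiderTree k) (rootUnion S) ↔ k / 2 ≤ S.ncard := by
  simp [isDefensiveAlliance_iff, preimage_mid_rootUnion, root_mem_rootUnion]

lemma eq_rootUnion_of_isDefensiveAlliance {A : Set (Unit ⊕ Fin k ⊕ Fin k)}
    (hA : IsDefensiveAlliance (spiderTree k) A) (hne : A.Nonempty) (hleaf : ∀ i, leaf i ∉ A) :
    A = rootUnion (mid ⁻¹' A) := by
  have hmid := (isDefensiveAlliance_iff.1 hA).2
  have hroot : root ∈ A := by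
    obtain ⟨(⟨⟩ | i | i), hv⟩ := hne
    · exact hv
    · exact (hmid i hv).resolve_right (hleaf i)
    · exact absurd hv (hleaf i)
  ext (⟨⟩ | i | i)
  · exact iff_of_true hroot (root_mem_rootUnion _)
  · simp [rootUnion]
  · simp [hleaf, leaf_notMem_rootUnion]

lemma isGloballyMinimalDA_singleton_leaf (i : Fin k) :
    IsGloballyMinimalDA (spiderTree k) {leaf i} := by
  refine ⟨Set.singleton_nonempty _, isDefensiveAlliance_iff.2 ⟨by simp, by simp⟩, ?_⟩
  intro B hB hBne
  exact absurd (Set.ssubset_singleton_iff.1 hB) hBne.ne_empty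

lemma isGloballyMinimalDA_rootUnion {S : Set (Fin k)} (hS : S.ncard = k / 2) :
    IsGloballyMinimalDA (spiderTree k) (rootUnion S) := by
  refine isGloballyMinimalDA_iff_forall_subset.2
    ⟨⟨root, root_mem_rootUnion S⟩, isDefensiveAlliance_rootUnion_iff.2 hS.ge, ?_⟩
  intro B hBS hBne hB
  have hB_eq := eq_rootUnion_of_isDefensiveAlliance hB hBne
    fun i hi => leaf_notMem_rootUnion S i (hBS hi)
  have hsub : mid ⁻¹' B ⊆ S := preimage_mid_rootUnion S ▸ Set.preimage_mono hBS
  have hcard : S.ncard ≤ (mid ⁻¹' B).ncard :=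
    hS ▸ isDefensiveAlliance_rootUnion_iff.1 (hB_eq ▸ hB)
  rw [hB_eq, Set.eq_of_subset_of_ncard_le hsub hcard]

lemma isGloballyMinimalDA_iff {A : Set (Unit ⊕ Fin k ⊕ Fin k)} :
    IsGloballyMinimalDA (spiderTree k) A ↔
      (∃ i, A = {leaf i}) ∨ ∃ S : Set (Fin k), S.ncard = k / 2 ∧ A = rootUnion S := by
  refine ⟨fun hA => ?_, ?_⟩
  · obtain ⟨hne, hDA, hmin⟩ := isGloballyMinimalDA_iff_forall_subset.1 hA
    by_cases hleaf : ∃ i, leaf i ∈ A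
    · obtain ⟨i, hi⟩ := hleaf
      exact .inl ⟨i, (hmin _ (Set.singleton_subset_iff.2 hi) (Set.singleton_nonempty _)
        (isGloballyMinimalDA_singleton_leaf i).2.1).symm⟩
    · push Not at hleaf
      have hA_eq := eq_rootUnion_of_isDefensiveAlliance hDA hne hleaf
      -- A subset of `k / 2` of the middle vertices of `A` already forms an alliance with the root.
      obtain ⟨S, hS, hcard⟩ := Set.exists_subset_card_eq
        (isDefensiveAlliance_rootUnion_iff.1 (hA_eq ▸ hDA))
      have hS_eq := hmin (rootUnion S) (hA_eq ▸ Set.union_subset_union_right _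
        (Set.image_mono hS)) ⟨root, root_mem_rootUnion S⟩
        (isDefensiveAlliance_rootUnion_iff.2 hcard.ge)
      exact .inr ⟨S, hcard, hS_eq.symm⟩
  · rintro (⟨i, rfl⟩ | ⟨S, hS, rfl⟩)
    · exact isGloballyMinimalDA_singleton_leaf i
    · exact isGloballyMinimalDA_rootUnion hS

lemma setOf_isGloballyMinimalDA :
    {A | IsGloballyMinimalDA (spiderTree k) A} =
      Set.range (fun i => {leaf i}) ∪ rootUnion '' {S | S.ncard = k / 2} := by
  ext A
  simp only [Set.mem_ofPred_eq, isGloballyMinimalDA_iff, Set.mem_union, Set.mem_range,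
    Set.mem_image, eq_comm (a := A)]

lemma card_globallyMinimalDA :
    Nat.card {A // IsGloballyMinimalDA (spiderTree k) A} = k + k.choose (k / 2) := by
  have hdisj : Disjoint (Set.range fun i => {leaf i})
      (rootUnion '' {S : Set (Fin k) | S.ncard = k / 2}) := by
    rw [Set.disjoint_left]
    rintro _ ⟨i, rfl⟩ ⟨S, -, hS⟩
    exact leaf_notMem_rootUnion S i (hS ▸ rfl)
  have hleaves :
      (Set.range fun i : Fin k => ({leaf i} : Set (Unit ⊕ Fin k ⊕ Fin k))).ncard = k := by
    rw [Set.ncard_range_of_injective (fun i j h => by simpa using h), Nat.card_fin]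
  have hsubsets : {S : Set (Fin k) | S.ncard = k / 2}.ncard = k.choose (k / 2) := by
    simpa using Set.ncard_powerset_ncard (Set.finite_univ (α := Fin k)) (k / 2)
  rw [← Set.coe_ofPred, Nat.card_coe_set_eq, setOf_isGloballyMinimalDA,
    Set.ncard_union_eq hdisj, hleaves, Set.ncard_image_of_injective _ rootUnion_injective,
    hsubsets]

end SpiderTree

theorem globallyMinimalDA_spiderTree_characterization_general (k : ℕ) :
    (∀ A : Set (Unit ⊕ Fin k ⊕ Fin k),
      IsGloballyMinimalDA (spiderTree k) A ↔
        ((∃ i : Fin k, A = {Sum.inr (Sum.inr i)}) ∨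
         (∃ A' : Set (Fin k), A'.ncard = (k - 1 + 1) / 2 ∧
            A = {Sum.inl ()} ∪ ((fun i => Sum.inr (Sum.inl i)) '' A')))) ∧
    Nat.card {A : Set (Unit ⊕ Fin k ⊕ Fin k) //
        IsGloballyMinimalDA (spiderTree k) A} =
      k + Nat.choose k ((k - 1 + 1) / 2) := by
  have hceil : (k - 1 + 1) / 2 = k / 2 := by omega
  rw [hceil]
  exact ⟨fun A => SpiderTree.isGloballyMinimalDA_iff, SpiderTree.card_globallyMinimalDA⟩

/-- For `k ≥ 2`, the globally minimal defensive alliances of the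
spider tree `T_k` are exactly the `k` singletons `{u'_i}` together with the
sets `{r} ∪ A'` where `A' ⊆ {u_1,…,u_k}` and `|A'| = ⌈(k-1)/2⌉`; in
particular there are exactly `k + binom(k, ⌈(k-1)/2⌉)` of them. -/
theorem globallyMinimalDA_spiderTree_characterization (k : ℕ) (hk : 2 ≤ k) :
    (∀ A : Set (Unit ⊕ Fin k ⊕ Fin k),
      IsGloballyMinimalDA (spiderTree k) A ↔
        ((∃ i : Fin k, A = {Sum.inr (Sum.inr i)}) ∨
         (∃ A' : Set (Fin k), A'.ncard = (k - 1 + 1) / 2 ∧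
            A = {Sum.inl ()} ∪ ((fun i => Sum.inr (Sum.inl i)) '' A')))) ∧
    Nat.card {A : Set (Unit ⊕ Fin k ⊕ Fin k) //
        IsGloballyMinimalDA (spiderTree k) A} =
      k + Nat.choose k ((k - 1 + 1) / 2) :=
  globallyMinimalDA_spiderTree_characterization_general k
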